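/- arXiv:2412.03835 — 3 statements merged into one kernel-verified Lean document; each statement's English description precedes it below -/
import Mathlib

section
/- For a strictly positive probability vector p, the Hill number D_q(p) = (∑ p_i^q)^{1/(1-q)} converges to 1/min_i(p_i) as q → -∞. -/
/-! For `q < 0` the smallest weight `m` dominates: `m ^ q ≤ ∑ pᵢ ^ q ≤ S · m ^ q`. Raising to the
power `1 / (1 - q) > 0` gives the bounds `(c · m ^ q) ^ (1 / (1 - q))` with `c = 1` and `c = S`,
and both tend to `m⁻¹` because `q / (1 - q) → -1` while `c ^ (1 / (1 - q)) → 1`. -/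

open Finset Filter Topology

lemma tendsto_one_div_one_sub_atBot : Tendsto (fun q : ℝ => 1 / (1 - q)) atBot (𝓝 0) := by
  have h : Tendsto (fun q : ℝ => 1 - q) atBot atTop :=
    tendsto_atTop_add_const_left atBot 1 tendsto_neg_atBot_atTop
  simpa only [one_div, Pi.inv_def] using h.inv_tendsto_atTop

lemma tendsto_mul_one_div_one_sub_atBot :
    Tendsto (fun q : ℝ => q * (1 / (1 - q))) atBot (𝓝 (-1)) := by
  have h : Tendsto (fun q : ℝ => -1 + 1 / (1 - q)) atBot (𝓝 (-1 + 0)) :=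
    tendsto_const_nhds.add tendsto_one_div_one_sub_atBot
  rw [add_zero] at h
  refine h.congr' ?_
  filter_upwards [eventually_lt_atBot 0] with q hq
  field_simp [show 1 - q ≠ 0 by linarith]
  ring

lemma tendsto_mul_rpow_rpow_one_div_one_sub_atBot {c m : ℝ} (hc : 0 < c) (hm : 0 < m) :
    Tendsto (fun q : ℝ => (c * m ^ q) ^ (1 / (1 - q))) atBot (𝓝 m⁻¹) := by
  have hsplit : (fun q : ℝ => (c * m ^ q) ^ (1 / (1 - q))) =
      fun q => c ^ (1 / (1 - q)) * m ^ (q * (1 / (1 - q))) := by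
    ext q
    rw [Real.mul_rpow hc.le (Real.rpow_nonneg hm.le q), ← Real.rpow_mul hm.le]
  have hcpow : Tendsto (fun q : ℝ => c ^ (1 / (1 - q))) atBot (𝓝 1) := by
    simpa only [Function.comp_def, Real.rpow_zero] using
      ((Real.continuousAt_const_rpow hc.ne').tendsto.comp tendsto_one_div_one_sub_atBot)
  have hmpow : Tendsto (fun q : ℝ => m ^ (q * (1 / (1 - q)))) atBot (𝓝 m⁻¹) := by
    simpa only [Function.comp_def, Real.rpow_neg_one] using
      ((Real.continuousAt_const_rpow hm.ne').tendsto.comp tendsto_mul_one_div_one_sub_atBot)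
  simpa only [hsplit, one_mul] using hcpow.mul hmpow

lemma sum_rpow_le_card_mul_rpow_of_le {ι : Type*} (s : Finset ι) {p : ι → ℝ} {m q : ℝ}
    (hm : 0 < m) (hmp : ∀ i ∈ s, m ≤ p i) (hq : q ≤ 0) :
    ∑ i ∈ s, p i ^ q ≤ s.card * m ^ q := by
  simpa only [nsmul_eq_mul] using
    sum_le_card_nsmul s _ _ fun i hi => Real.rpow_le_rpow_of_nonpos hm (hmp i hi) hq

theorem hill_number_tendsto_inv_min_general
    (S : ℕ) [NeZero S] (p : Fin S → ℝ)
    (hp : ∀ i, 0 < p i) :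
    Tendsto (fun q : ℝ => (∑ i, p i ^ q) ^ (1 / (1 - q))) atBot
      (nhds (1 / Finset.univ.inf' Finset.univ_nonempty p)) := by
  obtain ⟨i₀, -, hi₀⟩ := exists_mem_eq_inf' univ_nonempty p
  set m := univ.inf' univ_nonempty p
  have hm : 0 < m := hi₀ ▸ hp i₀
  have hS : (0 : ℝ) < S := by exact_mod_cast Nat.pos_of_neZero S
  have hexp : ∀ q : ℝ, q ≤ 0 → 0 ≤ 1 / (1 - q) := fun q hq => div_nonneg zero_le_one (by linarith)
  have hpow : ∀ q : ℝ, ∀ i, 0 ≤ p i ^ q := fun q i => (Real.rpow_pos_of_pos (hp i) q).le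
  rw [one_div]
  refine tendsto_of_tendsto_of_tendsto_of_le_of_le'
    (by simpa only [one_mul] using tendsto_mul_rpow_rpow_one_div_one_sub_atBot one_pos hm)
    (tendsto_mul_rpow_rpow_one_div_one_sub_atBot hS hm) ?_ ?_
  · filter_upwards [eventually_le_atBot 0] with q hq
    refine Real.rpow_le_rpow (by positivity) ?_ (hexp q hq)
    exact hi₀ ▸ single_le_sum (fun i _ => hpow q i) (mem_univ i₀)
  · filter_upwards [eventually_le_atBot 0] with q hq
    refine Real.rpow_le_rpow (sum_nonneg fun i _ => hpow q i) ?_ (hexp q hq)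
    simpa only [card_univ, Fintype.card_fin] using
      sum_rpow_le_card_mul_rpow_of_le univ hm (fun i _ => inf'_le p (mem_univ i)) hq

theorem hill_number_tendsto_inv_min
    (S : ℕ) [NeZero S] (p : Fin S → ℝ)
    (hp : ∀ i, 0 < p i) (hsum : ∑ i, p i = 1) :
    Tendsto (fun q : ℝ => (∑ i, p i ^ q) ^ (1 / (1 - q))) atBot
      (nhds (1 / Finset.univ.inf' Finset.univ_nonempty p)) :=
  hill_number_tendsto_inv_min_general S p hp
end

section
/- For strictly positive probability vectors π and p and γ > 0, the γ-power cross-entropy H_γ(π,p) = -(1/γ) (∑ π_i p_i^γ) / (∑ p_i^{γ+1})^{γ/(γ+1)} satisfies H_γ(π,p) ≥ H_γ(π) where H_γ(π) = -(1/γ)(∑ π_i^{γ+1})^{1/(γ+1)}, with equality when p = π. -/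
open Finset

/-- Hölder's inequality for the conjugate exponents `γ + 1` and `(γ + 1) / γ`, applied to `f` and
`g ^ γ`. -/
theorem Real.sum_mul_rpow_le_rpow_sum_mul_rpow_sum {ι : Type*} (s : Finset ι) {f g : ι → ℝ}
    (hf : ∀ i ∈ s, 0 ≤ f i) (hg : ∀ i ∈ s, 0 ≤ g i) {γ : ℝ} (hγ : 0 < γ) :
    ∑ i ∈ s, f i * g i ^ γ ≤
      (∑ i ∈ s, f i ^ (γ + 1)) ^ (1 / (γ + 1)) * (∑ i ∈ s, g i ^ (γ + 1)) ^ (γ / (γ + 1)) := by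
  have hconj : (γ + 1).HolderConjugate ((γ + 1) / γ) :=
    Real.holderConjugate_iff.mpr ⟨by linarith, by field_simp; ring⟩
  have hpow : ∀ i ∈ s, (g i ^ γ) ^ ((γ + 1) / γ) = g i ^ (γ + 1) := fun i hi => by
    rw [← Real.rpow_mul (hg i hi)]
    field_simp
  have := Real.inner_le_Lp_mul_Lq_of_nonneg s hconj hf fun i hi => Real.rpow_nonneg (hg i hi) γ
  rwa [sum_congr rfl hpow, one_div_div] at this

section PowerEntropy

variable {ι : Type*} [Fintype ι]

noncomputable def powerCrossEntropy (γ : ℝ) (π p : ι → ℝ) : ℝ :=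
  -(1 / γ) * (∑ i, π i * p i ^ γ) / (∑ i, p i ^ (γ + 1)) ^ (γ / (γ + 1))

noncomputable def powerEntropy (γ : ℝ) (π : ι → ℝ) : ℝ :=
  -(1 / γ) * (∑ i, π i ^ (γ + 1)) ^ (1 / (γ + 1))

theorem powerEntropy_le_powerCrossEntropy {γ : ℝ} (hγ : 0 < γ) {π p : ι → ℝ}
    (hπ : ∀ i, 0 ≤ π i) (hp : ∀ i, 0 ≤ p i) :
    powerEntropy γ π ≤ powerCrossEntropy γ π p := by
  have hratio : (∑ i, π i * p i ^ γ) / (∑ i, p i ^ (γ + 1)) ^ (γ / (γ + 1)) ≤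
      (∑ i, π i ^ (γ + 1)) ^ (1 / (γ + 1)) :=
    div_le_of_le_mul₀ (Real.rpow_nonneg (sum_nonneg fun i _ => Real.rpow_nonneg (hp i) _) _)
      (Real.rpow_nonneg (sum_nonneg fun i _ => Real.rpow_nonneg (hπ i) _) _)
      (Real.sum_mul_rpow_le_rpow_sum_mul_rpow_sum univ (fun i _ => hπ i) (fun i _ => hp i) hγ)
  rw [powerEntropy, powerCrossEntropy, mul_div_assoc, neg_mul, neg_mul, neg_le_neg_iff]
  exact mul_le_mul_of_nonneg_left hratio (by positivity)

theorem powerCrossEntropy_self {γ : ℝ} (hγ : 0 < γ) {π : ι → ℝ} (hπ : ∀ i, 0 ≤ π i) :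
    powerCrossEntropy γ π π = powerEntropy γ π := by
  have hγ1 : γ + 1 ≠ 0 := by linarith
  have hsum : ∑ i, π i * π i ^ γ = ∑ i, π i ^ (γ + 1) :=
    sum_congr rfl fun i _ => by rw [Real.rpow_add' (hπ i) hγ1, Real.rpow_one, mul_comm]
  have hexp : 1 / (γ + 1) = 1 - γ / (γ + 1) := by field_simp; ring
  have hexp_ne : 1 - γ / (γ + 1) ≠ 0 := by rw [← hexp]; positivity
  rw [powerCrossEntropy, powerEntropy, hsum, mul_div_assoc, hexp,
    Real.rpow_sub' (sum_nonneg fun i _ => Real.rpow_nonneg (hπ i) _) hexp_ne, Real.rpow_one]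

end PowerEntropy

theorem gamma_power_cross_entropy_ge_general
    (S : ℕ) (pr p : Fin S → ℝ)
    (hpr : ∀ i, 0 < pr i) (hp : ∀ i, 0 < p i)
    (γ : ℝ) (hγ : 0 < γ) :
    -(1 / γ) * (∑ i, pr i * p i ^ γ) / (∑ i, p i ^ (γ + 1)) ^ (γ / (γ + 1)) ≥
      -(1 / γ) * (∑ i, pr i ^ (γ + 1)) ^ (1 / (γ + 1)) ∧
    (p = pr →
      -(1 / γ) * (∑ i, pr i * p i ^ γ) / (∑ i, p i ^ (γ + 1)) ^ (γ / (γ + 1)) =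
        -(1 / γ) * (∑ i, pr i ^ (γ + 1)) ^ (1 / (γ + 1))) :=
  ⟨powerEntropy_le_powerCrossEntropy hγ (fun i => (hpr i).le) (fun i => (hp i).le),
    fun h => by subst h; exact powerCrossEntropy_self hγ fun i => (hp i).le⟩

theorem gamma_power_cross_entropy_ge
    (S : ℕ) (pr p : Fin S → ℝ)
    (hpr : ∀ i, 0 < pr i) (hp : ∀ i, 0 < p i)
    (hprsum : ∑ i, pr i = 1) (hpsum : ∑ i, p i = 1)
    (γ : ℝ) (hγ : 0 < γ) :
    -(1 / γ) * (∑ i, pr i * p i ^ γ) / (∑ i, p i ^ (γ + 1)) ^ (γ / (γ + 1)) ≥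
      -(1 / γ) * (∑ i, pr i ^ (γ + 1)) ^ (1 / (γ + 1)) ∧
    (p = pr →
      -(1 / γ) * (∑ i, pr i * p i ^ γ) / (∑ i, p i ^ (γ + 1)) ^ (γ / (γ + 1)) =
        -(1 / γ) * (∑ i, pr i ^ (γ + 1)) ^ (1 / (γ + 1))) :=
  gamma_power_cross_entropy_ge_general S pr p hpr hp γ hγ
end

section
/- Let a_i > 0 for i = 1,...,S and q < 1. For θ with 1 + (q-1)θ a_i > 0 for all i, define p_θ,i = (1+(q-1)θ a_i)^{1/(q-1)} / ∑_j (1+(q-1)θ a_j)^{1/(q-1)}. Then the derivative of C(θ) = ∑_i a_i p_θ,i with respect to θ is nonnegative, i.e., C(θ) is monotone nondecreasing in θ. -/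
open Finset

private lemma tilted_key (q θ₁ θ₂ x y : ℝ) (hq : q < 1) (h12 : θ₁ ≤ θ₂) (hxy : x ≤ y)
    (h1 : 0 < 1 + (q-1)*θ₁*x) (h2 : 0 < 1 + (q-1)*θ₂*x)
    (h3 : 0 < 1 + (q-1)*θ₁*y) (h4 : 0 < 1 + (q-1)*θ₂*y) :
    (1 + (q-1)*θ₁*y) ^ (1/(q-1)) * (1 + (q-1)*θ₂*x) ^ (1/(q-1)) ≤
      (1 + (q-1)*θ₂*y) ^ (1/(q-1)) * (1 + (q-1)*θ₁*x) ^ (1/(q-1)) := by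
  rw [← Real.mul_rpow h3.le h2.le, ← Real.mul_rpow h4.le h1.le]
  apply Real.rpow_le_rpow_of_nonpos (by positivity)
  · nlinarith [mul_nonneg (sub_nonneg.2 h12) (sub_nonneg.2 hxy)]
  · have : q - 1 < 0 := by linarith
    exact le_of_lt (div_neg_of_pos_of_neg one_pos this)

theorem tilted_mean_monotoneOn
    (S : ℕ) (hS : 2 ≤ S) (q : ℝ) (hq : q < 1)
    (a : Fin S → ℝ) (ha : ∀ i, 0 < a i) :
    MonotoneOn
      (fun θ : ℝ =>
        (∑ i, a i * (1 + (q - 1) * θ * a i) ^ (1 / (q - 1))) /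
          ∑ j, (1 + (q - 1) * θ * a j) ^ (1 / (q - 1)))
      {θ : ℝ | ∀ i, 0 < 1 + (q - 1) * θ * a i} := by
  intro θ₁ hθ₁ θ₂ hθ₂ h12
  simp only [Set.mem_setOf_eq] at hθ₁ hθ₂
  set u : ℝ → Fin S → ℝ := fun θ i => (1 + (q - 1) * θ * a i) ^ (1 / (q - 1)) with hu
  have hupos : ∀ (θ : ℝ), (∀ i, 0 < 1 + (q-1)*θ*a i) → ∀ i, 0 < u θ i := by
    intro θ hθ i; exact Real.rpow_pos_of_pos (hθ i) _
  have hD1 : 0 < ∑ j, u θ₁ j := Finset.sum_pos (fun j _ => hupos θ₁ hθ₁ j) ⟨⟨0, by omega⟩, mem_univ _⟩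
  have hD2 : 0 < ∑ j, u θ₂ j := Finset.sum_pos (fun j _ => hupos θ₂ hθ₂ j) ⟨⟨0, by omega⟩, mem_univ _⟩
  simp only
  rw [div_le_div_iff₀ hD1 hD2]
  -- key pairwise inequality
  have hT : ∀ i j : Fin S,
      0 ≤ (a i - a j) * (u θ₂ i * u θ₁ j - u θ₁ i * u θ₂ j) := by
    intro i j
    rcases le_total (a j) (a i) with h | h
    · apply mul_nonneg (by linarith)
      have := tilted_key q θ₁ θ₂ (a j) (a i) hq h12 h (hθ₁ j) (hθ₂ j) (hθ₁ i) (hθ₂ i)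
      simp only [hu]; linarith
    · have hk := tilted_key q θ₁ θ₂ (a i) (a j) hq h12 h (hθ₁ i) (hθ₂ i) (hθ₁ j) (hθ₂ j)
      simp only [hu] at hk ⊢
      nlinarith [hk]
  have hsum : 0 ≤ ∑ i, ∑ j, (a i - a j) * (u θ₂ i * u θ₁ j - u θ₁ i * u θ₂ j) :=
    Finset.sum_nonneg fun i _ => Finset.sum_nonneg fun j _ => hT i j
  have hid : ∑ i, ∑ j, (a i - a j) * (u θ₂ i * u θ₁ j - u θ₁ i * u θ₂ j)
      = 2 * ((∑ i, a i * u θ₂ i) * (∑ j, u θ₁ j) - (∑ i, a i * u θ₁ i) * (∑ j, u θ₂ j)) := by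
    have e : ∀ i j : Fin S, (a i - a j) * (u θ₂ i * u θ₁ j - u θ₁ i * u θ₂ j)
        = (a i * u θ₂ i) * u θ₁ j - (a i * u θ₁ i) * u θ₂ j
          - u θ₂ i * (a j * u θ₁ j) + u θ₁ i * (a j * u θ₂ j) := by intro i j; ring
    simp only [e, Finset.sum_add_distrib, Finset.sum_sub_distrib,
      ← Finset.mul_sum, ← Finset.sum_mul]
    ring
  linarith [hsum, hid ▸ hsum, hid.symm ▸ hsum]
end
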